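/- Let I=⟨A,∅,R,R?⟩ be an AtIAF and S⊆A a set of arguments such that S is not stable-st with respect to I. Then for every attack r=(a,b)∈R? such that a∉S or b∉S: (i) r∈RE⁺(I,S,(st,true)) if and only if a∈S and b∉S⁺_I; and (ii) r∉RE⁻(I,S,(st,true)). -/
import Mathlib


universe u

/-- An abstract argumentation framework: a set of arguments with an attack relation. -/
structure AF (α : Type u) where
  args : Set α
  att : Set (α × α)

namespace AF

variable {α : Type u}

/-- `S⁺_F`: arguments attacked by `S`. -/
def plusSet (F : AF α) (S : Set α) : Set α := {a | a ∈ F.args ∧ ∃ b ∈ S, (b, a) ∈ F.att}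

/-- `S⁻_F`: arguments attacking `S`. -/
def minusSet (F : AF α) (S : Set α) : Set α := {a | a ∈ F.args ∧ ∃ b ∈ S, (a, b) ∈ F.att}

/-- `S` is conflict-free in `F`. -/
def confFree (F : AF α) (S : Set α) : Prop := S ∩ F.plusSet S = ∅

/-- `S` defends `a` in `F`: every attacker of `a` is attacked by `S`. -/
def defends (F : AF α) (S : Set α) (a : α) : Prop := ∀ b, (b, a) ∈ F.att → b ∈ F.plusSet S

/-- The characteristic function `Γ_F(S)`: arguments defended by `S`. -/
def Γ (F : AF α) (S : Set α) : Set α := {a | a ∈ F.args ∧ F.defends S a}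

/-- Admissible: conflict-free and self-defending. -/
def isAd (F : AF α) (S : Set α) : Prop := S ⊆ F.args ∧ F.confFree S ∧ S ⊆ F.Γ S

/-- Stable: conflict-free and attacking exactly the outside. -/
def isSt (F : AF α) (S : Set α) : Prop := S ⊆ F.args ∧ F.confFree S ∧ F.plusSet S = F.args \ S

/-- Complete: admissible and containing all defended arguments. -/
def isCo (F : AF α) (S : Set α) : Prop := F.isAd S ∧ F.Γ S ⊆ S

/-- Grounded: ⊆-minimal complete. -/
def isGr (F : AF α) (S : Set α) : Prop := F.isCo S ∧ ∀ T, F.isCo T → T ⊆ S → T = S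

/-- Preferred: ⊆-maximal admissible. -/
def isPr (F : AF α) (S : Set α) : Prop := F.isAd S ∧ ∀ T, F.isAd T → S ⊆ T → S = T

end AF

/-- The five common semantics. -/
inductive Sem : Type
  | ad | st | co | gr | pr
deriving DecidableEq

/-- `S` is a `σ`-extension of `F`. -/
def extOf {α : Type u} : Sem → AF α → Set α → Prop
  | .ad => AF.isAd
  | .st => AF.isSt
  | .co => AF.isCo
  | .gr => AF.isGr
  | .pr => AF.isPr

/-- An incomplete argumentation framework (data part). -/
structure IAF (α : Type u) where
  A : Set α
  Aq : Set α
  R : Set (α × α)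
  Rq : Set (α × α)

namespace IAF

variable {α : Type u}

/-- Well-formedness: `A`,`A?` disjoint; `R`,`R?` disjoint subsets of `(A∪A?)×(A∪A?)`. -/
def WF (I : IAF α) : Prop :=
  Disjoint I.A I.Aq ∧ Disjoint I.R I.Rq ∧
  I.R ⊆ (I.A ∪ I.Aq) ×ˢ (I.A ∪ I.Aq) ∧
  I.Rq ⊆ (I.A ∪ I.Aq) ×ˢ (I.A ∪ I.Aq)

/-- `cert(I)`: the AF projected on the certain part. -/
def cert (I : IAF α) : AF α := ⟨I.A, I.R ∩ I.A ×ˢ I.A⟩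

/-- `I'` is a partial completion of `I`. -/
def PartOf (I' I : IAF α) : Prop :=
  I'.WF ∧ I.A ⊆ I'.A ∧ I'.A ⊆ I.A ∪ I.Aq ∧
  I.R ∩ (I'.A ∪ I'.Aq) ×ˢ (I'.A ∪ I'.Aq) ⊆ I'.R ∧
  I'.R ⊆ I.R ∪ I.Rq ∧ I'.Aq ⊆ I.Aq ∧ I'.Rq ⊆ I.Rq

/-- `F` is a completion of `I`. -/
def IsCompletion (I : IAF α) (F : AF α) : Prop := ∃ I' : IAF α, I'.PartOf I ∧ F = I'.cert

/-- `I + R₀` for a set of uncertain attacks. -/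
def addR (I : IAF α) (R0 : Set (α × α)) : IAF α := ⟨I.A, I.Aq, I.R ∪ R0, I.Rq \ R0⟩

/-- `I − R₀` for a set of uncertain attacks. -/
def subR (I : IAF α) (R0 : Set (α × α)) : IAF α := ⟨I.A, I.Aq, I.R, I.Rq \ R0⟩

/-- `I + A₀` for a set of uncertain arguments. -/
def addA (I : IAF α) (A0 : Set α) : IAF α := ⟨I.A ∪ A0, I.Aq \ A0, I.R, I.Rq⟩

/-- `I − A₀` for a set of uncertain arguments. -/
def subA (I : IAF α) (A0 : Set α) : IAF α :=
  ⟨I.A, I.Aq \ A0,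
   I.R \ {p | p ∈ I.R ∪ I.Rq ∧ (p.1 ∈ A0 ∨ p.2 ∈ A0)},
   I.Rq \ {p | p ∈ I.R ∪ I.Rq ∧ (p.1 ∈ A0 ∨ p.2 ∈ A0)}⟩

/-- `S⁺_I`. -/
def plusI (I : IAF α) (S : Set α) : Set α := {a | a ∈ I.A ∪ I.Aq ∧ ∃ b ∈ S, (b, a) ∈ I.R}

/-- `S⁻_I`. -/
def minusI (I : IAF α) (S : Set α) : Set α := {a | a ∈ I.A ∪ I.Aq ∧ ∃ b ∈ S, (a, b) ∈ I.R}

/-- `S^∼_I`. -/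
def simI (I : IAF α) (S : Set α) : Set α :=
  {a | a ∈ I.A ∪ I.Aq ∧ ∀ b ∈ S, (b, a) ∉ I.R ∪ I.Rq}

end IAF

/-- An element of an IAF: either an argument or an attack. -/
inductive Elem (α : Type u) : Type u
  | arg (a : α)
  | att (r : α × α)

/-- `e` is an uncertain element of `I`, i.e. `e ∈ A? ∪ R?`. -/
def IAF.isUnc {α : Type u} (I : IAF α) : Elem α → Prop
  | .arg a => a ∈ I.Aq
  | .att r => r ∈ I.Rq

/-- `I + {e}`. -/
def IAF.addE {α : Type u} (I : IAF α) : Elem α → IAF α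
  | .arg a => I.addA {a}
  | .att r => I.addR {r}

/-- `I − {e}`. -/
def IAF.subE {α : Type u} (I : IAF α) : Elem α → IAF α
  | .arg a => I.subA {a}
  | .att r => I.subR {r}

/-- `e` is the unique uncertain element of `I`, i.e. `A? ∪ R? = {e}`. -/
def onlyUnc {α : Type u} (I : IAF α) : Elem α → Prop
  | .arg a => I.Aq = {a} ∧ I.Rq = ∅
  | .att r => I.Aq = ∅ ∧ I.Rq = {r}

/-- A verification status: a semantics together with true/false. -/
abbrev VStatus := Sem × Bool

/-- `S` has verification status `j` in the AF `F`. -/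
def hasStatus {α : Type u} (F : AF α) (S : Set α) (j : VStatus) : Prop :=
  cond j.2 (extOf j.1 F S) (¬ extOf j.1 F S)

/-- `S` is stable-`j` w.r.t. `I`. -/
def IAF.stableJ {α : Type u} (I : IAF α) (S : Set α) (j : VStatus) : Prop :=
  ∀ F, I.IsCompletion F → hasStatus F S j

/-- `S` is stable-`σ` w.r.t. `I`. -/
def IAF.stableSem {α : Type u} (I : IAF α) (S : Set α) (σ : Sem) : Prop :=
  I.stableJ S (σ, true) ∨ I.stableJ S (σ, false)

/-- `RE⁺(I,S,j)`: uncertain elements whose addition is `j`-relevant for `S` w.r.t. `I`. -/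
def REplus {α : Type u} (I : IAF α) (S : Set α) (j : VStatus) : Set (Elem α) :=
  {e | I.isUnc e ∧ ∃ I' : IAF α, I'.PartOf I ∧ onlyUnc I' e ∧
    hasStatus (I'.addE e).cert S j ∧ ¬ hasStatus (I'.subE e).cert S j}

/-- `RE⁻(I,S,j)`: uncertain elements whose removal is `j`-relevant for `S` w.r.t. `I`. -/
def REminus {α : Type u} (I : IAF α) (S : Set α) (j : VStatus) : Set (Elem α) :=
  {e | I.isUnc e ∧ ∃ I' : IAF α, I'.PartOf I ∧ onlyUnc I' e ∧
    hasStatus (I'.subE e).cert S j ∧ ¬ hasStatus (I'.addE e).cert S j}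

/-- `e` is `σ`-irrelevant for `S` w.r.t. `I`. -/
def irrelevant {α : Type u} (I : IAF α) (S : Set α) (σ : Sem) (e : Elem α) : Prop :=
  e ∉ REplus I S (σ, true) ∧ e ∉ REminus I S (σ, true) ∧
  e ∉ REplus I S (σ, false) ∧ e ∉ REminus I S (σ, false)

/-- `PosVer_σ(I,S) = true`. -/
def PosVer {α : Type u} (σ : Sem) (I : IAF α) (S : Set α) : Prop :=
  ∃ F, I.IsCompletion F ∧ extOf σ F S

/-- `NecVer_σ(I,S) = true`. -/
def NecVer {α : Type u} (σ : Sem) (I : IAF α) (S : Set α) : Prop :=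
  ∀ F, I.IsCompletion F → extOf σ F S

/-- `SRE⁺(I,S,j)`: uncertain elements whose addition is strongly `j`-relevant. -/
def SREplus {α : Type u} (I : IAF α) (S : Set α) (j : VStatus) : Set (Elem α) :=
  {e | I.isUnc e ∧ ∀ I' : IAF α, I'.PartOf (I.subE e) → ¬ I'.stableJ S j}

/-- `SRE⁻(I,S,j)`: uncertain elements whose removal is strongly `j`-relevant. -/
def SREminus {α : Type u} (I : IAF α) (S : Set α) (j : VStatus) : Set (Elem α) :=
  {e | I.isUnc e ∧ ∀ I' : IAF α, I'.PartOf (I.addE e) → ¬ I'.stableJ S j}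

/-- The `OutRel(I,S,(a,b))` predicate. -/
def OutRel {α : Type u} (I : IAF α) (S : Set α) (r : α × α) : Prop :=
  (I.minusI {r.2} \ {r.1}) ∩ I.simI S = ∅ ∧
  PosVer Sem.co
    ((I.addR {p | p ∈ I.Rq ∧ p.1 ∈ S ∧ p.2 ∈ I.minusI {r.2} \ {r.1}}).subR
      {p | p ∈ I.Rq ∧ p.1 ≠ r.1 ∧ p.2 = r.2}) S


variable {α : Type u}

lemma isSt_congr {A : Set α} {T U : Set (α × α)} {S : Set α}
    (h2 : (AF.mk A T).plusSet S = (AF.mk A U).plusSet S) :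
    (AF.mk A T).isSt S ↔ (AF.mk A U).isSt S := by
  unfold AF.isSt AF.confFree
  rw [h2]

lemma plus_inter {A : Set α} (T : Set (α × α)) {S : Set α} (hS : S ⊆ A) :
    (AF.mk A (T ∩ A ×ˢ A)).plusSet S = (AF.mk A T).plusSet S := by
  ext x
  simp only [AF.plusSet, Set.mem_setOf_eq, Set.mem_inter_iff, Set.mem_prod]
  constructor
  · rintro ⟨hx, b, hb, h1, _⟩
    exact ⟨hx, b, hb, h1⟩
  · rintro ⟨hx, b, hb, h1⟩
    exact ⟨hx, b, hb, h1, hS hb, hx⟩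

lemma isSt_inter {A : Set α} (T : Set (α × α)) {S : Set α} (hS : S ⊆ A) :
    (AF.mk A (T ∩ A ×ˢ A)).isSt S ↔ (AF.mk A T).isSt S :=
  isSt_congr (plus_inter T hS)

lemma plus_union_single {A : Set α} {T : Set (α × α)} {r : α × α} {S : Set α}
    (h : r.1 ∈ S → r.2 ∈ (AF.mk A T).plusSet S) :
    (AF.mk A (T ∪ {r})).plusSet S = (AF.mk A T).plusSet S := by
  ext x
  simp only [AF.plusSet, Set.mem_setOf_eq, Set.mem_union, Set.mem_singleton_iff]
  constructor
  · rintro ⟨hx, b, hb, h1 | h1⟩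
    · exact ⟨hx, b, hb, h1⟩
    · have hb1 : r.1 ∈ S := by rw [← h1]; exact hb
      have hx2 : x = r.2 := by rw [← h1]
      subst hx2
      exact h hb1
  · rintro ⟨hx, b, hb, h1⟩
    exact ⟨hx, b, hb, Or.inl h1⟩

/-- characterization of `(st,true)`-relevance in an AtIAF. -/
theorem stmt5 {α : Type u} (I : IAF α) (S : Set α)
    (hWF : I.WF) (hAt : I.Aq = ∅) (hS : S ⊆ I.A)
    (hns : ¬ I.stableSem S Sem.st) :
    ∀ r ∈ I.Rq, (r.1 ∉ S ∨ r.2 ∉ S) →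
      (Elem.att r ∈ REplus I S (Sem.st, true) ↔ r.1 ∈ S ∧ r.2 ∉ I.plusI S) ∧
      Elem.att r ∉ REminus I S (Sem.st, true) := by
  obtain ⟨hAAq, hRRq, hRsub, hRqsub⟩ := hWF
  have hAU : I.A ∪ I.Aq = I.A := by rw [hAt, Set.union_empty]
  have hRA : I.R ⊆ I.A ×ˢ I.A := by rwa [hAU] at hRsub
  intro r hr hrS
  have hrA : r ∈ I.A ×ˢ I.A := by have := hRqsub hr; rwa [hAU] at this
  have hbA : r.2 ∈ I.A := hrA.2
  -- generic facts about a partial completion whose only uncertain element is r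
  have generic : ∀ I' : IAF α, I'.PartOf I → onlyUnc I' (Elem.att r) →
      I'.A = I.A ∧ I.R ⊆ I'.R := by
    intro I' hP hou
    have h1 : I'.A ⊆ I.A := by rw [← hAU]; exact hP.2.2.1
    have hA' : I'.A = I.A := Set.Subset.antisymm h1 hP.2.1
    have hA'U : I'.A ∪ I'.Aq = I.A := by rw [hA', hou.1, Set.union_empty]
    have hRR' : I.R ⊆ I'.R := by
      intro p hp
      exact hP.2.2.2.1 ⟨hp, by rw [hA'U]; exact hRA hp⟩
    exact ⟨hA', hRR'⟩
  -- reduction of the verification statuses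
  have hstat : ∀ I' : IAF α, I'.A = I.A →
      (hasStatus (I'.addE (Elem.att r)).cert S (Sem.st, true) ↔
        (AF.mk I.A (I'.R ∪ {r})).isSt S) ∧
      (hasStatus (I'.subE (Elem.att r)).cert S (Sem.st, true) ↔
        (AF.mk I.A I'.R).isSt S) := by
    intro I' hA'
    constructor
    · show (AF.mk I'.A ((I'.R ∪ {r}) ∩ I'.A ×ˢ I'.A)).isSt S ↔ _
      rw [hA']
      exact isSt_inter _ hS
    · show (AF.mk I'.A (I'.R ∩ I'.A ×ˢ I'.A)).isSt S ↔ _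
      rw [hA']
      exact isSt_inter _ hS
  refine ⟨⟨?_, ?_⟩, ?_⟩
  · -- forward direction of (i)
    rintro ⟨-, I', hP, hou, hadd, hsub⟩
    obtain ⟨hA', hRR'⟩ := generic I' hP hou
    rw [(hstat I' hA').1] at hadd
    rw [(hstat I' hA').2] at hsub
    constructor
    · by_contra haS
      exact hsub ((isSt_congr (plus_union_single (fun h => absurd h haS))).mp hadd)
    · intro hbp
      obtain ⟨-, c, hc, hcR⟩ := hbp
      have hbp' : r.2 ∈ (AF.mk I.A I'.R).plusSet S := ⟨hbA, c, hc, hRR' hcR⟩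
      exact hsub ((isSt_congr (plus_union_single (fun _ => hbp'))).mp hadd)
  · -- backward direction of (i)
    rintro ⟨haS, hbp⟩
    have hbS : r.2 ∉ S := hrS.resolve_left (not_not_intro haS)
    -- there is a completion in which S is stable
    have hex : ∃ F, I.IsCompletion F ∧ extOf Sem.st F S := by
      by_contra hno
      push_neg at hno
      exact hns (Or.inr (fun F hF => hno F hF))
    obtain ⟨F, ⟨I'', hP'', hFeq⟩, hFst⟩ := hex
    have hA''1 : I''.A ⊆ I.A := by rw [← hAU]; exact hP''.2.2.1
    have hA'' : I''.A = I.A := Set.Subset.antisymm hA''1 hP''.2.1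
    -- the certain attacks of that completion
    obtain ⟨Rst, hIRst, hRstU, hRstA, hstst⟩ :
        ∃ Rst : Set (α × α), I.R ⊆ Rst ∧ Rst ⊆ I.R ∪ I.Rq ∧ Rst ⊆ I.A ×ˢ I.A ∧
          (AF.mk I.A Rst).isSt S := by
      refine ⟨I''.R ∩ I.A ×ˢ I.A, ?_, ?_, Set.inter_subset_right, ?_⟩
      · intro p hp
        refine ⟨hP''.2.2.2.1 ⟨hp, ⟨?_, ?_⟩⟩, hRA hp⟩
        · exact Or.inl (by rw [hA'']; exact (hRA hp).1)
        · exact Or.inl (by rw [hA'']; exact (hRA hp).2)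
      · exact fun p hp => hP''.2.2.2.2.1 hp.1
      · have hcert : F = AF.mk I.A (I''.R ∩ I.A ×ˢ I.A) := by
          rw [hFeq]; unfold IAF.cert; rw [hA'']
        rw [← hcert]; exact hFst
    have hplus : (AF.mk I.A Rst).plusSet S = I.A \ S := hstst.2.2
    -- remove all attacks from S towards r.2
    have hrR2 : r ∉ Rst \ {p : α × α | p.1 ∈ S ∧ p.2 = r.2} := fun h => h.2 ⟨haS, rfl⟩
    have hIR2 : I.R ⊆ Rst \ {p : α × α | p.1 ∈ S ∧ p.2 = r.2} := by
      intro p hp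
      refine ⟨hIRst hp, fun hmem => hbp ⟨Or.inl hbA, p.1, hmem.1, ?_⟩⟩
      rw [← hmem.2]; exact hp
    refine ⟨hr, ⟨I.A, ∅, Rst \ {p : α × α | p.1 ∈ S ∧ p.2 = r.2}, {r}⟩,
      ⟨⟨?_, ?_, ?_, ?_⟩, subset_rfl, Set.subset_union_left,
        fun p hp => hIR2 hp.1, Set.diff_subset.trans hRstU, Set.empty_subset _,
        Set.singleton_subset_iff.mpr hr⟩, ⟨rfl, rfl⟩, ?_, ?_⟩
    · exact Set.disjoint_empty _
    · exact Set.disjoint_singleton_right.mpr hrR2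
    · show Rst \ _ ⊆ (I.A ∪ ∅) ×ˢ (I.A ∪ ∅)
      rw [Set.union_empty]
      exact Set.diff_subset.trans hRstA
    · show {r} ⊆ (I.A ∪ ∅) ×ˢ (I.A ∪ ∅)
      rw [Set.union_empty]
      exact Set.singleton_subset_iff.mpr hrA
    · -- S is stable after adding r
      rw [(hstat ⟨I.A, ∅, Rst \ {p : α × α | p.1 ∈ S ∧ p.2 = r.2}, {r}⟩ rfl).1]
      have hplus2 : (AF.mk I.A ((Rst \ {p : α × α | p.1 ∈ S ∧ p.2 = r.2}) ∪ {r})).plusSet S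
          = I.A \ S := by
        ext x
        constructor
        · rintro ⟨hxA, c, hc, hcx | hcx⟩
          · have hx : x ∈ (AF.mk I.A Rst).plusSet S := ⟨hxA, c, hc, hcx.1⟩
            rwa [hplus] at hx
          · have hx2 : x = r.2 := by
              have : (c, x) = r := hcx
              rw [← this]
            subst hx2
            exact ⟨hbA, hbS⟩
        · rintro ⟨hxA, hxS⟩
          have hx : x ∈ (AF.mk I.A Rst).plusSet S := by
            rw [hplus]; exact ⟨hxA, hxS⟩
          obtain ⟨-, c, hc, hcx⟩ := hx
          by_cases hxb : x = r.2
          · refine ⟨hxA, r.1, haS, Or.inr ?_⟩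
            show (r.1, x) = r
            rw [hxb]
          · exact ⟨hxA, c, hc, Or.inl ⟨hcx, fun hmem => hxb hmem.2⟩⟩
      refine ⟨hS, ?_, hplus2⟩
      show S ∩ _ = ∅
      rw [hplus2]
      ext x
      simp only [Set.mem_inter_iff, Set.mem_diff, Set.mem_empty_iff_false, iff_false]
      rintro ⟨h1, -, h2⟩
      exact h2 h1
    · -- S is not stable after removing r
      rw [(hstat ⟨I.A, ∅, Rst \ {p : α × α | p.1 ∈ S ∧ p.2 = r.2}, {r}⟩ rfl).2]
      intro hstab
      have hb2 : r.2 ∈ I.A \ S := ⟨hbA, hbS⟩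
      rw [← hstab.2.2] at hb2
      obtain ⟨-, c, hc, hcx⟩ := hb2
      exact hcx.2 ⟨hc, rfl⟩
  · -- part (ii)
    rintro ⟨-, I', hP, hou, hsubSt, haddNot⟩
    obtain ⟨hA', hRR'⟩ := generic I' hP hou
    rw [(hstat I' hA').2] at hsubSt
    rw [(hstat I' hA').1] at haddNot
    by_cases haS : r.1 ∈ S
    · have hbS : r.2 ∉ S := hrS.resolve_left (not_not_intro haS)
      have hb : r.2 ∈ (AF.mk I.A I'.R).plusSet S := by
        rw [hsubSt.2.2]; exact ⟨hbA, hbS⟩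
      exact haddNot ((isSt_congr (plus_union_single (fun _ => hb))).mpr hsubSt)
    · exact haddNot ((isSt_congr (plus_union_single (fun h => absurd h haS))).mpr hsubSt)
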